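/- For k, l ∈ ℕ and A ∈ ℂ avoiding the poles, define f^{(k)}_l(A) = Γ((A+1+l)/2) Γ((A−l)/2) / (2^{2k+2} Γ((A+2k+3+l)/2) Γ((A+2k+2−l)/2)). Then f^{(k)}_l(A) has the partial-fraction decomposition f^{(k)}_l(A) = Σ_{i=0}^{k} [b_i/(A+2i−l) + c_i/(A+2k−2i+1+l)] with b_i = −c_i = a^{(k)}_{l,i}/((2k)!(2l+1)), where a^{(k)}_{l,i} = (−1)^i (2l+1)(2k)!/(2^{2k+1} i!(k−i)!) · Γ(l−i+1/2)/Γ(l+k−i+3/2). -/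

import Mathlib

open Complex

/-- `f^{(k)}_l(A)` of Appendix B of the paper. -/
noncomputable def fkl (k l : ℕ) (A : ℂ) : ℂ :=
  Complex.Gamma ((A + 1 + l) / 2) * Complex.Gamma ((A - l) / 2) /
    (2 ^ (2 * k + 2) * Complex.Gamma ((A + 2 * k + 3 + l) / 2) *
      Complex.Gamma ((A + 2 * k + 2 - l) / 2))

/-- `a^{(k)}_{l,i}`. -/
noncomputable def akli (k l i : ℕ) : ℂ :=
  (-1) ^ i * (2 * (l : ℂ) + 1) * ((2 * k).factorial : ℂ) /
    (2 ^ (2 * k + 1) * (i.factorial : ℂ) * ((k - i).factorial : ℂ)) *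
    Complex.Gamma ((l : ℂ) - i + 1 / 2) / Complex.Gamma ((l : ℂ) + k - i + 3 / 2)

/-! Both Gamma quotients in `fkl` telescope by `Γ(z + 1) = z Γ(z)`, so `fkl k l A` is the
reciprocal of the product of the `2k + 2` distinct linear factors `A - (l - 2j)` and
`A + l + 1 + 2j`, `j ≤ k`. Lagrange interpolation of the constant `1` at these nodes gives its
partial fraction expansion, whose coefficient at a node is the nodal weight there. For two
arithmetic progressions of step `2` the weights are products of factorials and of consecutive odd
numbers, and the Gamma quotient in `akli` telescopes to the same product. -/

open Finset Nat Lagrange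

theorem prod_range_natCast_sub_self {R : Type*} [CommRing R] (i : ℕ) :
    ∏ j ∈ range i, ((j : R) - i) = (-1) ^ i * i ! := by
  rw [← prod_range_reflect, ← prod_range_add_one_eq_factorial, Nat.cast_prod,
    show (-1 : R) ^ i = ∏ _j ∈ range i, (-1) by simp, ← prod_mul_distrib]
  refine prod_congr rfl fun j hj => ?_
  have := mem_range.mp hj
  push_cast [Nat.cast_sub (by omega : j ≤ i - 1), Nat.cast_sub (by omega : 1 ≤ i)]
  ring

theorem prod_range_erase_natCast_sub {R : Type*} [CommRing R] {i k : ℕ} (hik : i ≤ k) :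
    ∏ j ∈ (range (k + 1)).erase i, ((j : R) - i) = (-1) ^ i * i ! * (k - i)! := by
  induction k, hik using Nat.le_induction with
  | base =>
    rw [range_add_one, erase_insert notMem_range_self, prod_range_natCast_sub_self, Nat.sub_self,
      Nat.factorial_zero, Nat.cast_one, mul_one]
  | succ k hik ih =>
    rw [range_add_one, erase_insert_of_ne (by omega), prod_insert (by simp), ih,
      Nat.succ_sub hik, Nat.factorial_succ]
    push_cast [Nat.cast_sub hik]
    ring

namespace Lagrange

variable {K ι κ : Type*} [Field K] [DecidableEq ι] [DecidableEq κ]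

theorem inv_prod_sub_eq_sum_nodalWeight {s : Finset ι} {v : ι → K} {x : K}
    (hvs : Set.InjOn v s) (hs : s.Nonempty) (hx : ∀ i ∈ s, x ≠ v i) :
    (∏ i ∈ s, (x - v i))⁻¹ = ∑ i ∈ s, nodalWeight s v i * (x - v i)⁻¹ := by
  have h := eval_interpolate_not_at_node (1 : ι → K) hx
  simp only [interpolate_one hvs hs, Polynomial.eval_one, eval_nodal, Pi.one_apply, mul_one] at h
  exact inv_eq_of_mul_eq_one_right h.symm

theorem nodalWeight_disjSum_inl (s : Finset ι) (t : Finset κ) (v : ι → K) (w : κ → K)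
    (i : ι) :
    nodalWeight (s.disjSum t) (Sum.elim v w) (.inl i) =
      nodalWeight s v i * ∏ j ∈ t, (v i - w j)⁻¹ := by
  have : (s.disjSum t).erase (.inl i) = (s.erase i).disjSum t := by
    ext (j | j) <;> simp
  rw [nodalWeight, this, prod_disjSum]
  rfl

theorem nodalWeight_disjSum_inr (s : Finset ι) (t : Finset κ) (v : ι → K) (w : κ → K)
    (j : κ) :
    nodalWeight (s.disjSum t) (Sum.elim v w) (.inr j) =
      nodalWeight t w j * ∏ i ∈ s, (w j - v i)⁻¹ := by
  have : (s.disjSum t).erase (.inr j) = s.disjSum (t.erase j) := by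
    ext (i | i) <;> simp
  rw [nodalWeight, this, prod_disjSum, mul_comm]
  rfl

theorem nodalWeight_range_sub_mul (a d : K) {i k : ℕ} (hik : i ≤ k) :
    nodalWeight (range (k + 1)) (fun j : ℕ => a - d * j) i =
      (d ^ k * (-1) ^ i * i ! * (k - i)!)⁻¹ := by
  rw [nodalWeight, prod_inv_distrib,
    prod_congr rfl fun (j : ℕ) _ => show a - d * i - (a - d * j) = d * ((j : K) - i) by ring,
    ← pow_card_mul_prod, card_erase_of_mem (mem_range.2 (by omega)), card_range,
    prod_range_erase_natCast_sub hik, Nat.add_sub_cancel]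
  ring

end Lagrange

theorem prod_range_add_natCast_ne_zero {R : Type*} [CommRing R] [IsDomain R] {z : R}
    (hz : ∀ m : ℕ, z ≠ -m) (n : ℕ) : ∏ j ∈ range n, (z + j) ≠ 0 :=
  prod_ne_zero_iff.2 fun j _ h => hz j (eq_neg_of_add_eq_zero_left h)

theorem Complex.Gamma_add_nat_eq_prod_mul {z : ℂ} (hz : ∀ m : ℕ, z ≠ -m) (n : ℕ) :
    Gamma (z + n) = (∏ j ∈ range n, (z + j)) * Gamma z := by
  induction n with
  | zero => simp
  | succ n ih =>
    have hzn : z + n ≠ 0 := fun h => hz n (eq_neg_of_add_eq_zero_left h)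
    rw [Nat.cast_succ, ← add_assoc, Gamma_add_one _ hzn, ih, prod_range_succ]
    ring

theorem akli_div_eq (k l i : ℕ) :
    akli k l i / ((2 * k)! * (2 * (l : ℂ) + 1)) =
      (-1) ^ i * (2 ^ k * i ! * (k - i)! *
        ∏ j ∈ range (k + 1), (2 * (l : ℂ) + 1 + 2 * j - 2 * i))⁻¹ := by
  rw [akli]
  set z : ℂ := l - i + 1 / 2
  have hz : ∀ m : ℕ, z ≠ -m := by
    intro m hm
    have : ((2 * l + 1 + 2 * m - 2 * i : ℤ) : ℂ) = 0 := by push_cast; linear_combination 2 * hm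
    have : (2 * l + 1 + 2 * m - 2 * i : ℤ) = 0 := by exact_mod_cast this
    omega
  have hprod : ∏ j ∈ range (k + 1), (2 * (l : ℂ) + 1 + 2 * j - 2 * i) =
      2 ^ (k + 1) * ∏ j ∈ range (k + 1), (z + j) := by
    rw [show (2 : ℂ) ^ (k + 1) = 2 ^ #(range (k + 1)) by rw [card_range], pow_card_mul_prod]
    exact prod_congr rfl fun j _ => by ring
  have hGamma :
      Gamma ((l : ℂ) + k - i + 3 / 2) = (∏ j ∈ range (k + 1), (z + j)) * Gamma z := by
    rw [← Gamma_add_nat_eq_prod_mul hz]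
    congr 1
    push_cast
    ring
  rw [hGamma, hprod]
  clear_value z
  have := prod_range_add_natCast_ne_zero hz (k + 1)
  have := Gamma_ne_zero hz
  have : 2 * (l : ℂ) + 1 ≠ 0 := by exact_mod_cast Nat.succ_ne_zero (2 * l)
  have : ((2 * k)! : ℂ) ≠ 0 := by exact_mod_cast (2 * k).factorial_ne_zero
  field_simp
  ring

def fklPole (l : ℕ) : ℕ ⊕ ℕ → ℂ :=
  Sum.elim (fun j => l - 2 * j) (fun j => (-l - 1) - 2 * j)

theorem fklPole_injective (l : ℕ) : Function.Injective (fklPole l) := by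
  rintro (i | i) (j | j) h <;>
    simp only [fklPole, Sum.elim_inl, Sum.elim_inr, Sum.inl.injEq, Sum.inr.injEq,
      reduceCtorEq] at h ⊢
  · exact_mod_cast (by linear_combination -h / 2 : (i : ℂ) = j)
  · have : ((2 * l + 1 + 2 * j : ℕ) : ℂ) = (2 * i : ℕ) := by push_cast; linear_combination h
    have := Nat.cast_injective this
    omega
  · have : ((2 * l + 1 + 2 * i : ℕ) : ℂ) = (2 * j : ℕ) := by push_cast; linear_combination -h
    have := Nat.cast_injective this
    omega
  · exact_mod_cast (by linear_combination -h / 2 : (i : ℂ) = j)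

theorem fkl_eq_inv_prod_sub_fklPole {k l : ℕ} {A : ℂ}
    (hA1 : ∀ m : ℕ, A ≠ (l : ℂ) - 2 * m) (hA2 : ∀ m : ℕ, A ≠ -(l : ℂ) - 1 - 2 * m) :
    fkl k l A = (∏ p ∈ (range (k + 1)).disjSum (range (k + 1)), (A - fklPole l p))⁻¹ := by
  have hz1 : ∀ m : ℕ, (A + 1 + l) / 2 ≠ -m := fun m hm => hA2 m (by linear_combination 2 * hm)
  have hz2 : ∀ m : ℕ, (A - l) / 2 ≠ -m := fun m hm => hA1 m (by linear_combination 2 * hm)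
  have harg1 : (A + 2 * k + 3 + l) / 2 = (A + 1 + l) / 2 + (k + 1 : ℕ) := by push_cast; ring
  have harg2 : (A + 2 * k + 2 - l) / 2 = (A - l) / 2 + (k + 1 : ℕ) := by push_cast; ring
  have hprod1 : ∏ j ∈ range (k + 1), (A - fklPole l (.inl j)) =
      2 ^ (k + 1) * ∏ j ∈ range (k + 1), ((A - l) / 2 + j) := by
    rw [show (2 : ℂ) ^ (k + 1) = 2 ^ #(range (k + 1)) by rw [card_range], pow_card_mul_prod]
    exact prod_congr rfl fun j _ => by simp only [fklPole, Sum.elim_inl]; ring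
  have hprod2 : ∏ j ∈ range (k + 1), (A - fklPole l (.inr j)) =
      2 ^ (k + 1) * ∏ j ∈ range (k + 1), ((A + 1 + l) / 2 + j) := by
    rw [show (2 : ℂ) ^ (k + 1) = 2 ^ #(range (k + 1)) by rw [card_range], pow_card_mul_prod]
    exact prod_congr rfl fun j _ => by simp only [fklPole, Sum.elim_inr]; ring
  rw [fkl, harg1, harg2, Gamma_add_nat_eq_prod_mul hz1, Gamma_add_nat_eq_prod_mul hz2,
    prod_disjSum, hprod1, hprod2]
  have := Gamma_ne_zero hz1
  have := Gamma_ne_zero hz2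
  have := prod_range_add_natCast_ne_zero hz1 (k + 1)
  have := prod_range_add_natCast_ne_zero hz2 (k + 1)
  field_simp
  ring

theorem nodalWeight_fklPole_inl {k l i : ℕ} (hik : i ≤ k) :
    nodalWeight ((range (k + 1)).disjSum (range (k + 1))) (fklPole l) (.inl i) =
      akli k l i / ((2 * k)! * (2 * (l : ℂ) + 1)) := by
  rw [fklPole, nodalWeight_disjSum_inl, nodalWeight_range_sub_mul _ _ hik, akli_div_eq,
    prod_inv_distrib,
    prod_congr rfl fun (j : ℕ) _ =>
      show (l : ℂ) - 2 * i - (-l - 1 - 2 * j) = 2 * l + 1 + 2 * j - 2 * i by ring]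
  simp only [mul_inv, ← inv_pow, inv_neg, inv_one]
  ring

theorem nodalWeight_fklPole_inr {k l i : ℕ} (hik : i ≤ k) :
    nodalWeight ((range (k + 1)).disjSum (range (k + 1))) (fklPole l) (.inr (k - i)) =
      -(akli k l i / ((2 * k)! * (2 * (l : ℂ) + 1))) := by
  have hreflect : ∏ j ∈ range (k + 1), ((-l - 1 - 2 * ((k - i : ℕ) : ℂ)) - (l - 2 * j)) =
      (-1) ^ (k + 1) * ∏ j ∈ range (k + 1), (2 * (l : ℂ) + 1 + 2 * j - 2 * i) := by
    rw [← prod_range_reflect (fun j : ℕ => 2 * (l : ℂ) + 1 + 2 * j - 2 * i),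
      show (-1 : ℂ) ^ (k + 1) = (-1) ^ #(range (k + 1)) by rw [card_range], pow_card_mul_prod]
    refine prod_congr rfl fun j hj => ?_
    have := mem_range.mp hj
    push_cast [Nat.cast_sub hik, Nat.cast_sub (by omega : j ≤ k)]
    ring
  rw [fklPole, nodalWeight_disjSum_inr, nodalWeight_range_sub_mul _ _ (Nat.sub_le k i),
    akli_div_eq, prod_inv_distrib, hreflect, Nat.sub_sub_self hik]
  have hsign : (-1 : ℂ) ^ (k - i) * (-1) ^ (k + 1) = -(-1) ^ i := by
    obtain ⟨n, rfl⟩ := Nat.exists_eq_add_of_le hik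
    rw [Nat.add_sub_cancel_left, ← pow_add, show n + (i + n + 1) = i + 1 + 2 * n by ring, pow_add,
      pow_mul, neg_one_sq, one_pow, mul_one, pow_succ, mul_neg_one]
  simp only [mul_inv, ← inv_pow, inv_neg, inv_one]
  linear_combination (2 : ℂ)⁻¹ ^ k * ((k - i)! : ℂ)⁻¹ * (i ! : ℂ)⁻¹ *
    (∏ j ∈ range (k + 1), (2 * (l : ℂ) + 1 + 2 * j - 2 * i))⁻¹ * hsign

theorem stmt13 (k l : ℕ) (A : ℂ)
    (hA1 : ∀ m : ℕ, A ≠ (l : ℂ) - 2 * m)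
    (hA2 : ∀ m : ℕ, A ≠ -(l : ℂ) - 1 - 2 * m) :
    fkl k l A = ∑ i ∈ Finset.range (k + 1),
      (akli k l i / (((2 * k).factorial : ℂ) * (2 * (l : ℂ) + 1)) / (A + 2 * i - l)
        + (-(akli k l i / (((2 * k).factorial : ℂ) * (2 * (l : ℂ) + 1))))
            / (A + 2 * k - 2 * i + 1 + l)) := by
  have hx : ∀ p ∈ (range (k + 1)).disjSum (range (k + 1)), A ≠ fklPole l p := by
    rintro (i | i) _
    exacts [hA1 i, hA2 i]
  -- the `i`-th summand on the right pairs the poles `l - 2i` and `-l - 1 - 2(k - i)`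
  rw [fkl_eq_inv_prod_sub_fklPole hA1 hA2,
    inv_prod_sub_eq_sum_nodalWeight (fklPole_injective l).injOn ⟨.inl 0, by simp⟩ hx,
    sum_disjSum, ← sum_range_reflect (fun m =>
      nodalWeight ((range (k + 1)).disjSum (range (k + 1))) (fklPole l) (.inr m) *
        (A - fklPole l (.inr m))⁻¹), ← sum_add_distrib]
  refine sum_congr rfl fun i hi => ?_
  have hik : i ≤ k := Nat.lt_succ_iff.mp (mem_range.mp hi)
  rw [Nat.add_sub_cancel, nodalWeight_fklPole_inl hik, nodalWeight_fklPole_inr hik]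
  simp only [fklPole, Sum.elim_inl, Sum.elim_inr, Nat.cast_sub hik]
  ring
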